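/- Let C be a minimal [n,k]_{q^m/q} rank-metric code with k ≥ 2. Then n ≥ k + m - 1. -/

import Mathlib

/-!
The rank weight `dim_K σ(v)` of `v` is the dimension of the `K`-span of its entries. For a nonzero
codeword `v`, every vector in the `L`-span of `σ(v) ⊆ K^n` has rank support inside `σ(v)`, so by
minimality this span, of `L`-dimension at least `dim_K σ(v)`, meets `C` only in the line `L v`;
hence `dim_K σ(v) + k ≤ n + 1`. It remains to find a codeword of weight `m`. Take independent
`u, v ∈ C` and the `K`-span `U ⊆ L²` of the columns `(u i, v i)`, of dimension `d`. The codeword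
`x₁ u + x₂ v` has weight `d - dim_K (U ∩ x^⊥)`, and minimality forces `U ∩ x^⊥ ≠ 0` for every `x`.
If all weights were below `m`, the `q^m + 1` points of the projective line over `L` would give
pairwise trivially intersecting subspaces `U ∩ x^⊥` of dimension at least `max 1 (d - m + 1)`:
too many nonzero vectors for `U`.
-/

open Module Submodule

/-- The rank support of a vector `v ∈ L^n` over the subfield `K`: the `K`-span of the
rows of the expansion matrix, i.e. the space of all `(φ (v 1), ..., φ (v n))` for
`K`-linear functionals `φ : L → K`. -/
noncomputable def rkSupport (K : Type) {L : Type} [Field K] [Field L] [Algebra K L]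
    {n : ℕ} (v : Fin n → L) : Submodule K (Fin n → K) :=
  LinearMap.range (LinearMap.pi (fun i => LinearMap.applyₗ (v i) :
    Fin n → Module.Dual K L →ₗ[K] K))

section

variable {K L : Type} [Field K] [Field L] [Algebra K L] {n : ℕ}

theorem rkSupport_eq_map_range_dualMap (v : Fin n → L) :
    rkSupport K v = (LinearMap.range (Fintype.linearCombination K v).dualMap).map
      (Pi.basisFun K (Fin n)).dualBasis.equivFun.toLinearMap := by
  rw [rkSupport, ← LinearMap.range_comp]
  congr 1
  ext φ i
  simp

theorem rkSupport_le_of_ker_le {v v' : Fin n → L}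
    (h : LinearMap.ker (Fintype.linearCombination K v) ≤
      LinearMap.ker (Fintype.linearCombination K v')) :
    rkSupport K v' ≤ rkSupport K v := by
  simp only [rkSupport_eq_map_range_dualMap, LinearMap.range_dualMap_eq_dualAnnihilator_ker]
  exact map_mono (dualAnnihilator_anti h)

theorem finrank_rkSupport (v : Fin n → L) :
    finrank K (rkSupport K v) = finrank K (span K (Set.range v)) := by
  rw [rkSupport_eq_map_range_dualMap, LinearEquiv.finrank_map_eq,
    LinearMap.finrank_range_dualMap_eq_finrank_range, Fintype.range_linearCombination]

theorem rkSupport_zero : rkSupport K (0 : Fin n → L) = ⊥ := by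
  rw [eq_bot_iff]
  rintro _ ⟨φ, rfl⟩
  ext
  simp

theorem rkSupport_add_le (a b : Fin n → L) :
    rkSupport K (a + b) ≤ rkSupport K a ⊔ rkSupport K b := by
  rintro _ ⟨φ, rfl⟩
  have ha : (fun i => φ (a i)) ∈ rkSupport K a := ⟨φ, rfl⟩
  have hb : (fun i => φ (b i)) ∈ rkSupport K b := ⟨φ, rfl⟩
  convert add_mem_sup ha hb using 1
  ext i
  exact map_add φ (a i) (b i)

theorem rkSupport_smul_le (α : L) (a : Fin n → L) :
    rkSupport K (α • a) ≤ rkSupport K a := by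
  rintro _ ⟨φ, rfl⟩
  exact ⟨φ ∘ₗ LinearMap.mulLeft K α, rfl⟩

theorem rkSupport_algebraMap_comp_le (u : Fin n → K) :
    rkSupport K (algebraMap K L ∘ u) ≤ K ∙ u := by
  rintro _ ⟨φ, rfl⟩
  refine mem_span_singleton.mpr ⟨φ 1, funext fun i => ?_⟩
  simp [Algebra.algebraMap_eq_smul_one, mul_comm]

theorem rkSupport_le_of_mem_span {S : Submodule K (Fin n → K)} {c : Fin n → L}
    (hc : c ∈ span L ((algebraMap K L ∘ ·) '' (S : Set (Fin n → K)))) :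
    rkSupport K c ≤ S := by
  induction hc using span_induction with
  | mem x hx =>
    obtain ⟨u, hu, rfl⟩ := hx
    exact (rkSupport_algebraMap_comp_le u).trans (span_singleton_le_iff_mem u S |>.mpr hu)
  | zero => exact rkSupport_zero.trans_le bot_le
  | add x y _ _ hx hy => exact (rkSupport_add_le x y).trans (sup_le hx hy)
  | smul α x _ hx => exact (rkSupport_smul_le α x).trans hx

theorem finrank_le_finrank_span_algebraMap_comp (S : Submodule K (Fin n → K)) :
    finrank K S ≤ finrank L (span L ((algebraMap K L ∘ ·) '' (S : Set (Fin n → K)))) := by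
  let b := Module.finBasis K S
  have hb : LinearIndependent L (fun j => algebraMap K L ∘ (b j : Fin n → K)) :=
    linearIndependent_algebraMap_comp_iff.mpr (b.linearIndependent.map' S.subtype S.ker_subtype)
  calc finrank K S
      = finrank L (span L (Set.range fun j => algebraMap K L ∘ (b j : Fin n → K))) := by
        rw [finrank_span_eq_card hb, Fintype.card_fin]
    _ ≤ _ := by
        apply Submodule.finrank_mono (span_mono _)
        rintro _ ⟨j, rfl⟩
        exact ⟨b j, (b j).2, rfl⟩

variable (K) in
def IsMinimalCode (C : Submodule L (Fin n → L)) : Prop :=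
  ∀ v ∈ C, ∀ v' ∈ C, rkSupport K v' ≤ rkSupport K v → ∃ α : L, v' = α • v

theorem IsMinimalCode.finrank_rkSupport_add_finrank_le {C : Submodule L (Fin n → L)}
    (hC : IsMinimalCode K C) {v : Fin n → L} (hv : v ∈ C) (hv0 : v ≠ 0) :
    finrank K (rkSupport K v) + finrank L C ≤ n + 1 := by
  set V := span L ((algebraMap K L ∘ ·) '' (rkSupport K v : Set (Fin n → K)))
  have hV : finrank K (rkSupport K v) ≤ finrank L V := finrank_le_finrank_span_algebraMap_comp _
  have hVC : V ⊓ C ≤ L ∙ v := by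
    rintro c ⟨hcV, hcC⟩
    obtain ⟨α, rfl⟩ := hC v hv c hcC (rkSupport_le_of_mem_span hcV)
    exact smul_mem _ α (mem_span_singleton_self v)
  have hinf : finrank L ↥(V ⊓ C) ≤ 1 := (finrank_mono hVC).trans (finrank_span_singleton hv0).le
  have hsup : finrank L ↥(V ⊔ C) ≤ n := (finrank_le _).trans_eq (finrank_fin_fun L)
  have := finrank_sup_add_finrank_inf_eq V C
  omega

theorem finrank_rkSupport_le [FiniteDimensional K L] (v : Fin n → L) :
    finrank K (rkSupport K v) ≤ finrank K L :=
  (finrank_rkSupport v).trans_le (finrank_le _)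

variable (K) in
def pairing (x : L × L) : L × L →ₗ[K] L :=
  (LinearMap.mulLeft K x.1).coprod (LinearMap.mulLeft K x.2)

theorem pairing_apply (x w : L × L) : pairing K x w = x.1 * w.1 + x.2 * w.2 := rfl

theorem disjoint_ker_pairing {x y : L × L} (h : x.1 * y.2 - x.2 * y.1 ≠ 0) :
    Disjoint (LinearMap.ker (pairing K x)) (LinearMap.ker (pairing K y)) := by
  rw [disjoint_def]
  intro w hx hy
  rw [LinearMap.mem_ker, pairing_apply] at hx hy
  refine Prod.ext (mul_left_cancel₀ h ?_) (mul_left_cancel₀ h ?_) <;>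
    simp only [Prod.fst_zero, Prod.snd_zero, mul_zero]
  · linear_combination y.2 * hx - x.2 * hy
  · linear_combination x.1 * hy - y.1 * hx

variable (K) in
/-- The `K`-span of the columns `(u i, v i)`: the `q`-system of the code spanned by `u` and `v`. -/
noncomputable def qSystem (u v : Fin n → L) : Submodule K (L × L) :=
  LinearMap.range ((Fintype.linearCombination K u).prod (Fintype.linearCombination K v))

instance (u v : Fin n → L) : FiniteDimensional K (qSystem K u v) :=
  LinearMap.finiteDimensional_range _

theorem pairing_comp_prod (x : L × L) (u v : Fin n → L) :
    pairing K x ∘ₗ (Fintype.linearCombination K u).prod (Fintype.linearCombination K v) =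
      Fintype.linearCombination K (x.1 • u + x.2 • v) := by
  refine LinearMap.ext fun μ => ?_
  simp [pairing_apply, Fintype.linearCombination_apply, Finset.mul_sum, ← Finset.sum_add_distrib]

theorem finrank_rkSupport_add_finrank_qSystem_inf_ker (x : L × L) (u v : Fin n → L) :
    finrank K (rkSupport K (x.1 • u + x.2 • v)) +
      finrank K ↥(qSystem K u v ⊓ LinearMap.ker (pairing K x)) = finrank K (qSystem K u v) := by
  have := ((pairing K x).domRestrict (qSystem K u v)).finrank_range_add_finrank_ker
  rwa [LinearMap.range_domRestrict, qSystem, ← LinearMap.range_comp, pairing_comp_prod,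
    Fintype.range_linearCombination, ← finrank_rkSupport, LinearMap.ker_domRestrict,
    ← finrank_map_subtype_eq, map_comap_subtype] at this

theorem IsMinimalCode.qSystem_inf_ker_pairing_ne_bot {C : Submodule L (Fin n → L)}
    (hC : IsMinimalCode K C) {u v : Fin n → L} (hu : u ∈ C) (hv : v ∈ C)
    (huv : LinearIndependent L ![u, v]) (x : L × L) :
    qSystem K u v ⊓ LinearMap.ker (pairing K x) ≠ ⊥ := by
  intro hbot
  set c := x.1 • u + x.2 • v
  have hker : ∀ μ, Fintype.linearCombination K c μ = 0 →
      Fintype.linearCombination K u μ = 0 ∧ Fintype.linearCombination K v μ = 0 := by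
    intro μ hμ
    have hmem : ((Fintype.linearCombination K u).prod (Fintype.linearCombination K v)) μ ∈
        qSystem K u v ⊓ LinearMap.ker (pairing K x) := by
      refine ⟨LinearMap.mem_range_self _ μ, LinearMap.mem_ker.mpr ?_⟩
      rwa [← LinearMap.comp_apply, pairing_comp_prod]
    rw [hbot, mem_bot] at hmem
    exact Prod.ext_iff.mp hmem
  have hc : c ∈ C := add_mem (smul_mem _ _ hu) (smul_mem _ _ hv)
  obtain ⟨α, hα⟩ := hC c hc u hu (rkSupport_le_of_ker_le fun μ hμ => (hker μ hμ).1)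
  obtain ⟨β, hβ⟩ := hC c hc v hv (rkSupport_le_of_ker_le fun μ hμ => (hker μ hμ).2)
  have hαβ := LinearIndependent.pair_iff.mp huv β (-α) (by rw [hα, hβ]; module)
  exact huv.ne_zero 0 (by simp [hα, neg_eq_zero.mp hαβ.2])

theorem Submodule.sum_card_sub_one_le_card_sub_one {R M ι : Type*} [Semiring R]
    [AddCommMonoid M] [Module R M] [Finite M] [Fintype ι] {U : Submodule R M}
    {W : ι → Submodule R M} (hWU : ∀ i, W i ≤ U) (hW : Pairwise fun i j => Disjoint (W i) (W j)) :
    ∑ i, (Nat.card (W i) - 1) ≤ Nat.card U - 1 := by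
  classical
  have := Fintype.ofFinite M
  have hcard (P : Submodule R M) : Nat.card P - 1 = ((P : Set M).toFinset.erase 0).card := by
    rw [Finset.card_erase_of_mem (by simp), ← Nat.card_eq_card_toFinset]
    rfl
  simp only [hcard]
  rw [← Finset.card_biUnion]
  · refine Finset.card_le_card fun w hw => ?_
    obtain ⟨i, -, hwi⟩ := Finset.mem_biUnion.mp hw
    simp only [Finset.mem_erase, Set.mem_toFinset, SetLike.mem_coe] at hwi ⊢
    exact ⟨hwi.1, hWU i hwi.2⟩
  · intro i _ j _ hij
    rw [Function.onFun, Finset.disjoint_left]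
    intro w hwi hwj
    simp only [Finset.mem_erase, Set.mem_toFinset, SetLike.mem_coe] at hwi hwj
    exact hwi.1 ((disjoint_def.mp (hW hij)) w hwi.2 hwj.2)

/-- Representatives of the `|L| + 1` points of the projective line over `L`. -/
def projPoint : Option L → L × L
  | none => (1, 0)
  | some s => (s, 1)

theorem projPoint_det_ne_zero {s t : Option L} (h : s ≠ t) :
    (projPoint s).1 * (projPoint t).2 - (projPoint s).2 * (projPoint t).1 ≠ 0 := by
  match s, t with
  | none, none => exact absurd rfl h
  | none, some _ => simp [projPoint]
  | some _, none => simp [projPoint]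
  | some a, some b => simpa [projPoint, sub_eq_zero] using h

theorem projPoint_ne_zero (t : Option L) : projPoint t ≠ 0 := by
  cases t <;> simp [projPoint]

theorem Nat.pow_sub_one_lt_mul_pow_sub_one {q m d e : ℕ} (hq : 2 ≤ q) (he : 1 ≤ e)
    (hd : d + 1 ≤ m + e) :
    q ^ d - 1 < (q ^ m + 1) * (q ^ e - 1) := by
  obtain ⟨f, rfl⟩ := Nat.exists_eq_add_of_le' he
  have := Nat.one_le_pow f q (by omega)
  have hf : q ^ f + 1 ≤ q ^ (f + 1) := by
    rw [pow_succ]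
    nlinarith
  have hd' : q ^ d ≤ q ^ m * q ^ f := by
    rw [← pow_add]
    exact Nat.pow_le_pow_right (by omega) (by omega)
  have : q ^ m * q ^ f ≤ q ^ m * (q ^ (f + 1) - 1) := Nat.mul_le_mul_left _ (by omega)
  rw [add_one_mul]
  omega

theorem Submodule.exists_linearIndependent_pair_mem {R M : Type*} [DivisionRing R]
    [AddCommGroup M] [Module R M] {C : Submodule R M} (hC : 2 ≤ finrank R C) :
    ∃ u ∈ C, ∃ v ∈ C, LinearIndependent R ![u, v] := by
  have : Nontrivial C := nontrivial_of_finrank_pos (R := R) (by omega)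
  obtain ⟨u, hu⟩ := exists_ne (0 : C)
  obtain ⟨v, huv⟩ := exists_linearIndependent_pair_of_one_lt_finrank (R := R) (by omega) hu
  exact ⟨u, u.2, v, v.2, LinearIndependent.pair_iff.mpr fun s t h =>
    LinearIndependent.pair_iff.mp huv s t (by ext1; simpa using h)⟩

theorem pow_add_one_mul_pow_sub_one_le [Finite L] (U : Submodule K (L × L)) {e : ℕ}
    (hU : ∀ t, e ≤ finrank K ↥(U ⊓ LinearMap.ker (pairing K (projPoint t)))) :
    (Nat.card K ^ finrank K L + 1) * (Nat.card K ^ e - 1) ≤ Nat.card K ^ finrank K U - 1 := by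
  have : Finite K := Finite.of_injective _ (algebraMap K L).injective
  have := Fintype.ofFinite L
  calc (Nat.card K ^ finrank K L + 1) * (Nat.card K ^ e - 1)
      = ∑ _ : Option L, (Nat.card K ^ e - 1) := by
        rw [Finset.sum_const, Finset.card_univ, Fintype.card_option, Fintype.card_eq_nat_card,
          Module.natCard_eq_pow_finrank (K := K) (V := L), smul_eq_mul]
    _ ≤ ∑ t, (Nat.card ↥(U ⊓ LinearMap.ker (pairing K (projPoint t))) - 1) := by
        gcongr with t
        exact (Nat.pow_le_pow_right Nat.card_pos (hU t)).trans_eq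
          Module.natCard_eq_pow_finrank.symm
    _ ≤ Nat.card U - 1 := sum_card_sub_one_le_card_sub_one (fun _ => inf_le_left)
        fun s t hst => (disjoint_ker_pairing (projPoint_det_ne_zero hst)).mono inf_le_right
          inf_le_right
    _ = _ := by rw [Module.natCard_eq_pow_finrank (K := K) (V := U)]

theorem IsMinimalCode.exists_finrank_rkSupport_eq [Finite L] {C : Submodule L (Fin n → L)}
    (hC : IsMinimalCode K C) (hk : 2 ≤ finrank L C) :
    ∃ v ∈ C, v ≠ 0 ∧ finrank K (rkSupport K v) = finrank K L := by
  have : Finite K := Finite.of_injective _ (algebraMap K L).injective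
  obtain ⟨u, hu, v, hv, huv⟩ := exists_linearIndependent_pair_mem hk
  by_contra! hfull
  set d := finrank K (qSystem K u v)
  set e := max 1 (d + 1 - finrank K L)
  have hU : ∀ t, e ≤ finrank K ↥(qSystem K u v ⊓ LinearMap.ker (pairing K (projPoint t))) := by
    intro t
    set x : L × L := projPoint t
    have hc0 : x.1 • u + x.2 • v ≠ 0 := fun h =>
      projPoint_ne_zero t (Prod.ext_iff.mpr (LinearIndependent.pair_iff.mp huv _ _ h))
    have h1 := one_le_finrank_iff.mpr (hC.qSystem_inf_ker_pairing_ne_bot hu hv huv x)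
    have h2 := finrank_rkSupport_add_finrank_qSystem_inf_ker (K := K) x u v
    have h3 := (finrank_rkSupport_le (K := K) (x.1 • u + x.2 • v)).lt_of_ne
      (hfull _ (add_mem (smul_mem _ _ hu) (smul_mem _ _ hv)) hc0)
    omega
  exact (Nat.pow_sub_one_lt_mul_pow_sub_one Finite.one_lt_card (le_max_left _ _) (by omega)).not_ge
    (pow_add_one_mul_pow_sub_one_le _ hU)

end

theorem stmt_16_general {K L : Type} [Field K] [Field L] [Algebra K L] [Fintype L]
    {n k m : ℕ} (hm : Module.finrank K L = m)
    (C : Submodule L (Fin n → L)) (hk : Module.finrank L C = k) (hk2 : 2 ≤ k)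
    (hmin : ∀ v ∈ C, ∀ v' ∈ C, rkSupport K v' ≤ rkSupport K v → ∃ α : L, v' = α • v) :
    k + m - 1 ≤ n := by
  have hC : IsMinimalCode K C := hmin
  obtain ⟨v, hv, hv0, hvm⟩ := hC.exists_finrank_rkSupport_eq (hk ▸ hk2)
  have := hC.finrank_rkSupport_add_finrank_le hv hv0
  omega

theorem stmt_16 {K L : Type} [Field K] [Field L] [Algebra K L] [Fintype K] [Fintype L]
    {n k m : ℕ} (hm : Module.finrank K L = m)
    (C : Submodule L (Fin n → L)) (hk : Module.finrank L C = k) (hk2 : 2 ≤ k)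
    (hmin : ∀ v ∈ C, ∀ v' ∈ C, rkSupport K v' ≤ rkSupport K v → ∃ α : L, v' = α • v) :
    k + m - 1 ≤ n :=
  stmt_16_general hm C hk hk2 hmin
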